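/- Let k be a commutative ring, (L,∘) a pre-Lie algebra over k, and ∘ its extension to S(L). Then for all A, B, C ∈ S(L): (A∘B)∘C = A∘((B∘C(1))·C(2)) (Sweedler notation, sum understood). -/
import Mathlib

open TensorProduct

set_option maxHeartbeats 1000000

/-- Auxiliary: span of monomials of length at most `n`. -/
abbrev preLieAux.Mon {k L S : Type*} [CommRing k] [AddCommGroup L] [Module k L]
    [CommRing S] [Algebra k S] (ι : L →ₗ[k] S) (n : ℕ) : Submodule k S :=
  Submodule.span k {m | ∃ l : List L, l.length ≤ n ∧ (l.map ι).prod = m}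

/-- Auxiliary: span of pure tensors with both factors in `Mon ι n`. -/
abbrev preLieAux.TT {k L S : Type*} [CommRing k] [AddCommGroup L] [Module k L]
    [CommRing S] [Algebra k S] (ι : L →ₗ[k] S) (n : ℕ) : Submodule k (S ⊗[k] S) :=
  Submodule.span k (Set.image2 (fun a b => a ⊗ₜ[k] b)
    ((preLieAux.Mon ι n : Submodule k S) : Set S) ((preLieAux.Mon ι n : Submodule k S) : Set S))

/-- Auxiliary: the candidate coderivation on the tensor square. -/
noncomputable abbrev preLieAux.rho {k S : Type*} [CommRing k] [CommRing S] [Algebra k S]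
    (φ : S →ₗ[k] S) : S ⊗[k] S →ₗ[k] S ⊗[k] S :=
  TensorProduct.map φ LinearMap.id + TensorProduct.map LinearMap.id φ

/-- Let `k` be a commutative ring, `(L, ∘)` a pre-Lie algebra over `k`, `S` the
symmetric algebra of `L` (with shuffle coproduct `Δ` and counit `ε`), and `cS` the extension of
`∘` to `S`.  Then for all `A, B, C ∈ S`: `(A ∘ B) ∘ C = A ∘ ((B ∘ C⁽¹⁾)·C⁽²⁾)`
(Sweedler notation, sum understood). -/
theorem preLie_extension_assoc_identity.{u}
    (k L S : Type u) [CommRing k] [AddCommGroup L] [Module k L]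
    [CommRing S] [Algebra k S] (ι : L →ₗ[k] S)
    (hfree : ∀ (A : Type u) [CommRing A] [Algebra k A] (f : L →ₗ[k] A),
      ∃! g : S →ₐ[k] A, ∀ x : L, g (ι x) = f x)
    (Δ : S →ₐ[k] S ⊗[k] S) (hΔ : ∀ x : L, Δ (ι x) = ι x ⊗ₜ 1 + 1 ⊗ₜ ι x)
    (ε : S →ₐ[k] k) (hε : ∀ x : L, ε (ι x) = 0)
    (circ : L →ₗ[k] L →ₗ[k] L)
    (hpl : ∀ X Y Z : L,
      circ X (circ Y Z) - circ (circ X Y) Z = circ X (circ Z Y) - circ (circ X Z) Y)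
    (cS : S →ₗ[k] S →ₗ[k] S)
    (hrestrict : ∀ x y : L, cS (ι x) (ι y) = ι (circ x y))
    (hone : ∀ A : S, cS A 1 = A)
    (hrec : ∀ (t x : L) (B : S),
      cS (ι t) (B * ι x) = cS (cS (ι t) B) (ι x) - cS (ι t) (cS B (ι x)))
    (hmul : ∀ A B C : S, cS (A * B) C =
      TensorProduct.lift ((LinearMap.mul k S).compl₁₂ (cS A) (cS B)) (Δ C)) :
    ∀ A B C : S, cS (cS A B) C =
      cS A (TensorProduct.lift ((LinearMap.mul k S).compl₁₂ (cS B) LinearMap.id) (Δ C)) := by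
  classical
  set M : ℕ → Submodule k S := preLieAux.Mon ι with hM
  set T : ℕ → Submodule k (S ⊗[k] S) := preLieAux.TT ι with hT
  -- the algebra S is generated by the image of ι
  have adjoin_top : Algebra.adjoin k (Set.range ι) = ⊤ := by
    obtain ⟨g0, hg0, hu⟩ := hfree S ι
    obtain ⟨g, hg, -⟩ := hfree (Algebra.adjoin k (Set.range ι))
      (LinearMap.codRestrict (Subalgebra.toSubmodule (Algebra.adjoin k (Set.range ι))) ι
        (fun x => Algebra.subset_adjoin ⟨x, rfl⟩))
    have e1 : (Algebra.adjoin k (Set.range ι)).val.comp g = g0 := by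
      refine hu _ (fun x => ?_)
      simp only [AlgHom.comp_apply, hg x]
      rfl
    have e2 : (AlgHom.id k S) = g0 := hu _ (fun x => rfl)
    rw [eq_top_iff]
    intro C _
    have h3 : (Algebra.adjoin k (Set.range ι)).val (g C) = C := by
      rw [← AlgHom.comp_apply, e1, ← e2]; rfl
    rw [← h3]; exact (g C).2
  -- induction principle
  have aind : ∀ {p : S → Prop}, (∀ x : L, p (ι x)) → (∀ r : k, p (algebraMap k S r)) →
      (∀ a b, p a → p b → p (a + b)) → (∀ a b, p a → p b → p (a * b)) → ∀ a, p a := by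
    intro p hx hr hadd hmul' a
    have ha : a ∈ Algebra.adjoin k (Set.range ι) := adjoin_top ▸ Algebra.mem_top
    exact Algebra.adjoin_induction
      (fun y hy => by obtain ⟨x, rfl⟩ := hy; exact hx x) hr
      (fun a b _ _ pa pb => hadd a b pa pb) (fun a b _ _ pa pb => hmul' a b pa pb) ha
  -- derivation property of ∘ (ι x) w.r.t. multiplication
  have prodx : ∀ (U V : S) (x : L), cS (U * V) (ι x) = cS U (ι x) * V + U * cS V (ι x) := by
    intro U V x
    rw [hmul, hΔ x]
    simp [TensorProduct.lift.tmul, LinearMap.compl₁₂_apply, LinearMap.mul_apply', hone]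
  have L0 : ∀ x : L, cS 1 (ι x) = 0 := by
    intro x
    have h := prodx 1 1 x
    rw [one_mul, one_mul, mul_one] at h
    have h2 : cS 1 (ι x) + 0 = cS 1 (ι x) + cS 1 (ι x) := by simpa using h
    simpa using (add_left_cancel h2).symm
  -- monomial submodule facts
  have Mmono : ∀ {m n : ℕ}, m ≤ n → M m ≤ M n := by
    intro m n hmn
    exact Submodule.span_mono (fun y hy => by
      obtain ⟨l, hl, he⟩ := hy; exact ⟨l, hl.trans hmn, he⟩)
  have hMone : ∀ n, (1 : S) ∈ M n := fun n => Submodule.subset_span ⟨[], by simp⟩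
  have hMgen : ∀ x : L, ι x ∈ M 1 := fun x => Submodule.subset_span ⟨[x], by simp⟩
  have hMmul : ∀ (a b : ℕ) (C : S), C ∈ M a → ∀ D : S, D ∈ M b → C * D ∈ M (a + b) := by
    intro a b C hC D hD
    have h1 : C * D ∈ M a * M b := Submodule.mul_mem_mul hC hD
    have h2 : M a * M b ≤ M (a + b) := by
      rw [hM]
      rw [Submodule.span_mul_span]
      refine Submodule.span_le.mpr ?_
      rintro z ⟨z1, hz1, z2, hz2, rfl⟩
      obtain ⟨l1, hl1, rfl⟩ := hz1
      obtain ⟨l2, hl2, rfl⟩ := hz2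
      refine Submodule.subset_span ⟨l1 ++ l2, ?_, by simp⟩
      simpa using Nat.add_le_add hl1 hl2
    exact h2 h1
  have exists_mem : ∀ C : S, ∃ n, C ∈ M n := by
    refine aind (fun x => ⟨1, hMgen x⟩) (fun r => ⟨0, ?_⟩) ?_ ?_
    · rw [Algebra.algebraMap_eq_smul_one]
      exact Submodule.smul_mem _ _ (hMone 0)
    · rintro a b ⟨m, hm⟩ ⟨n, hn⟩
      exact ⟨max m n, Submodule.add_mem _ (Mmono (le_max_left m n) hm)
        (Mmono (le_max_right m n) hn)⟩
    · rintro a b ⟨m, hm⟩ ⟨n, hn⟩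
      exact ⟨m + n, hMmul m n a hm b hn⟩
  have cSx_list : ∀ (l : List L) (x : L), cS ((l.map ι).prod) (ι x) ∈ M l.length := by
    intro l
    induction l with
    | nil => intro x; simpa using (L0 x ▸ Submodule.zero_mem (M 0))
    | cons t l ih =>
      intro x
      have : ((t :: l).map ι).prod = ι t * (l.map ι).prod := by simp
      rw [this, prodx, hrestrict]
      refine Submodule.add_mem _ ?_ ?_
      · exact Submodule.subset_span ⟨circ t x :: l, by simp⟩
      · have h1 := hMmul 1 l.length (ι t) (hMgen t) _ (ih x)
        simpa [Nat.add_comm] using h1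
  have cSx_mem : ∀ (n : ℕ) (x : L) (C : S), C ∈ M n → cS C (ι x) ∈ M n := by
    intro n x C hC
    induction hC using Submodule.span_induction with
    | mem m hm =>
      obtain ⟨l, hl, rfl⟩ := hm
      exact Mmono hl (cSx_list l x)
    | zero => simpa using Submodule.zero_mem (M n)
    | add a b _ _ ha hb =>
      rw [map_add, LinearMap.add_apply]
      exact Submodule.add_mem _ ha hb
    | smul r a _ hh =>
      rw [map_smul, LinearMap.smul_apply]
      exact Submodule.smul_mem _ _ hh
  have hMx : ∀ (m : ℕ) (C : S), C ∈ M m → ∀ x : L, C * ι x ∈ M (m + 1) :=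
    fun m C hC x => hMmul m 1 C hC (ι x) (hMgen x)
  -- multiplication by pure tensors preserves T
  have mulTL : ∀ (x : L) (m : ℕ) (u : S ⊗[k] S), u ∈ T m →
      (ι x ⊗ₜ[k] (1 : S)) * u ∈ T (m + 1) := by
    intro x m u hu
    induction hu using Submodule.span_induction with
    | mem w hw =>
      obtain ⟨a, ha, b, hb, rfl⟩ := hw
      rw [Algebra.TensorProduct.tmul_mul_tmul, one_mul]
      have hxa : ι x * a ∈ M (m + 1) := by
        rw [mul_comm]; exact hMx m a ha x
      exact Submodule.subset_span (Set.mem_image2_of_mem hxa (Mmono (Nat.le_succ m) hb))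
    | zero => rw [mul_zero]; exact Submodule.zero_mem _
    | add a b _ _ ha hb => rw [mul_add]; exact Submodule.add_mem _ ha hb
    | smul r a _ hh => rw [mul_smul_comm]; exact Submodule.smul_mem _ _ hh
  have mulTR : ∀ (x : L) (m : ℕ) (u : S ⊗[k] S), u ∈ T m →
      ((1 : S) ⊗ₜ[k] ι x) * u ∈ T (m + 1) := by
    intro x m u hu
    induction hu using Submodule.span_induction with
    | mem w hw =>
      obtain ⟨a, ha, b, hb, rfl⟩ := hw
      rw [Algebra.TensorProduct.tmul_mul_tmul, one_mul]
      have hxb : ι x * b ∈ M (m + 1) := by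
        rw [mul_comm]; exact hMx m b hb x
      exact Submodule.subset_span (Set.mem_image2_of_mem (Mmono (Nat.le_succ m) ha) hxb)
    | zero => rw [mul_zero]; exact Submodule.zero_mem _
    | add a b _ _ ha hb => rw [mul_add]; exact Submodule.add_mem _ ha hb
    | smul r a _ hh => rw [mul_smul_comm]; exact Submodule.smul_mem _ _ hh
  -- reduced coproduct of a monomial of length ≤ n+1 lies in T n
  have Dt : ∀ (n : ℕ) (l : List L), l.length ≤ n + 1 →
      Δ ((l.map ι).prod) - ((l.map ι).prod) ⊗ₜ[k] (1 : S)
        - (1 : S) ⊗ₜ[k] ((l.map ι).prod) ∈ T n := by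
    intro n l
    induction l generalizing n with
    | nil =>
      intro _
      simp only [List.map_nil, List.prod_nil, map_one]
      have h1 : (1 : S ⊗[k] S) - (1:S) ⊗ₜ[k] (1:S) - (1:S) ⊗ₜ[k] (1:S)
          = -((1:S) ⊗ₜ[k] (1:S)) := by
        rw [Algebra.TensorProduct.one_def]; ring
      rw [h1]
      exact Submodule.neg_mem _
        (Submodule.subset_span (Set.mem_image2_of_mem (hMone n) (hMone n)))
    | cons x l ih =>
      intro hlen
      rcases l with _ | ⟨y, l'⟩
      · simp only [List.map_cons, List.map_nil, List.prod_cons, List.prod_nil, mul_one]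
        rw [hΔ]
        have h1 : ι x ⊗ₜ[k] (1:S) + (1:S) ⊗ₜ[k] ι x - ι x ⊗ₜ[k] (1:S)
            - (1:S) ⊗ₜ[k] ι x = 0 := by ring
        rw [h1]; exact Submodule.zero_mem _
      · rcases n with _ | m
        · exfalso; simp at hlen
        set C : S := ((y :: l').map ι).prod with hC
        have hlen' : (y :: l').length ≤ m + 1 := by
          simpa using Nat.le_of_succ_le_succ (by simpa using hlen)
        have hCl : C ∈ M (m + 1) := Submodule.subset_span ⟨y :: l', hlen', rfl⟩
        have hR := ih m hlen'
        set R : S ⊗[k] S := Δ C - C ⊗ₜ[k] (1:S) - (1:S) ⊗ₜ[k] C with hRdef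
        have hprod : ((x :: y :: l').map ι).prod = ι x * C := by simp [hC]
        rw [hprod, map_mul, hΔ]
        have hΔC : Δ C = C ⊗ₜ[k] (1:S) + (1:S) ⊗ₜ[k] C + R := by rw [hRdef]; ring
        rw [hΔC]
        have expand : (ι x ⊗ₜ[k] (1:S) + (1:S) ⊗ₜ[k] ι x)
              * (C ⊗ₜ[k] (1:S) + (1:S) ⊗ₜ[k] C + R)
            - (ι x * C) ⊗ₜ[k] (1:S) - (1:S) ⊗ₜ[k] (ι x * C)
            = ι x ⊗ₜ[k] C + C ⊗ₜ[k] ι x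
              + (ι x ⊗ₜ[k] (1:S)) * R + ((1:S) ⊗ₜ[k] ι x) * R := by
          simp only [mul_add, add_mul, Algebra.TensorProduct.tmul_mul_tmul, one_mul, mul_one]
          abel
        rw [expand]
        have hx1 : ι x ∈ M (m + 1) := Mmono (by omega) (hMgen x)
        refine Submodule.add_mem _ (Submodule.add_mem _ (Submodule.add_mem _ ?_ ?_) ?_) ?_
        · exact Submodule.subset_span (Set.mem_image2_of_mem hx1 hCl)
        · exact Submodule.subset_span (Set.mem_image2_of_mem hCl hx1)
        · exact mulTL x m R hR
        · exact mulTR x m R hR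
  -- the convolution square of ε is ε
  have hE : ∀ D : S,
      ((Algebra.TensorProduct.lmul' k (S := k)).comp (Algebra.TensorProduct.map ε ε)) (Δ D)
        = ε D := by
    obtain ⟨g0, hg0, hu⟩ := hfree k 0
    have e1 : (((Algebra.TensorProduct.lmul' k (S := k)).comp
        (Algebra.TensorProduct.map ε ε)).comp Δ) = g0 := by
      refine hu _ (fun x => ?_)
      simp [hΔ, hε]
    have e2 : ε = g0 := hu _ (fun x => by simp [hε])
    intro D
    have := congrArg (fun h : S →ₐ[k] k => h D) (e1.trans e2.symm)
    simpa using this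
  -- cS 1 is given by the counit
  have Lε : ∀ C : S, cS 1 C = algebraMap k S (ε C) := by
    have key : ∀ (n : ℕ) (C : S), C ∈ M n → cS 1 C = algebraMap k S (ε C) := by
      intro n
      induction n with
      | zero =>
        intro C hC
        induction hC using Submodule.span_induction with
        | mem m hm =>
          obtain ⟨l, hl, rfl⟩ := hm
          have : l = [] := List.length_eq_zero_iff.mp (Nat.le_zero.mp hl)
          subst this
          simp [hone]
        | zero => simp
        | add a b _ _ ha hb => rw [map_add, map_add, map_add, ha, hb]
        | smul r a _ hh =>
          rw [map_smul, map_smul, hh]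
          simp only [Algebra.smul_def, map_mul, Algebra.algebraMap_self_apply]
      | succ n ih =>
        intro C hC
        induction hC using Submodule.span_induction with
        | mem m hm =>
          obtain ⟨l, hl, rfl⟩ := hm
          set D : S := (l.map ι).prod with hD
          have hRT : Δ D - D ⊗ₜ[k] (1:S) - (1:S) ⊗ₜ[k] D ∈ T n := Dt n l hl
          have hFR : ∀ u ∈ T n,
              TensorProduct.lift ((LinearMap.mul k S).compl₁₂ (cS 1) (cS 1)) u
                = algebraMap k S
                  (((Algebra.TensorProduct.lmul' k (S := k)).comp
                    (Algebra.TensorProduct.map ε ε)) u) := by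
            intro u hu
            induction hu using Submodule.span_induction with
            | mem w hw =>
              obtain ⟨a, ha, b, hb, rfl⟩ := hw
              have hfa := ih a ha
              have hfb := ih b hb
              simp only [TensorProduct.lift.tmul, LinearMap.compl₁₂_apply,
                LinearMap.mul_apply', AlgHom.comp_apply, Algebra.TensorProduct.map_tmul,
                Algebra.TensorProduct.lmul'_apply_tmul, map_mul, hfa, hfb]
            | zero => simp
            | add a b _ _ ha hb => rw [map_add, map_add, ha, hb, map_add]
            | smul r a _ hh =>
              rw [map_smul, map_smul, hh]
              simp only [Algebra.smul_def, map_mul, Algebra.algebraMap_self_apply]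
          have hrec2 : cS 1 D
              = TensorProduct.lift ((LinearMap.mul k S).compl₁₂ (cS 1) (cS 1)) (Δ D) := by
            have h := hmul 1 1 D
            rwa [one_mul] at h
          have hsplit : Δ D = D ⊗ₜ[k] (1:S) + (1:S) ⊗ₜ[k] D
              + (Δ D - D ⊗ₜ[k] (1:S) - (1:S) ⊗ₜ[k] D) := by ring
          have hFDl : TensorProduct.lift ((LinearMap.mul k S).compl₁₂ (cS 1) (cS 1))
              (D ⊗ₜ[k] (1:S)) = cS 1 D := by
            simp [TensorProduct.lift.tmul, LinearMap.compl₁₂_apply,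
              LinearMap.mul_apply', hone]
          have hFDr : TensorProduct.lift ((LinearMap.mul k S).compl₁₂ (cS 1) (cS 1))
              ((1:S) ⊗ₜ[k] D) = cS 1 D := by
            simp [TensorProduct.lift.tmul, LinearMap.compl₁₂_apply,
              LinearMap.mul_apply', hone]
          have hER : ((Algebra.TensorProduct.lmul' k (S := k)).comp
              (Algebra.TensorProduct.map ε ε)) (Δ D - D ⊗ₜ[k] (1:S) - (1:S) ⊗ₜ[k] D)
                = - ε D := by
            rw [map_sub, map_sub, hE]
            simp [Algebra.TensorProduct.lmul'_apply_tmul]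
          have heq : cS 1 D = cS 1 D + cS 1 D + algebraMap k S (- ε D) := by
            conv_lhs => rw [hrec2, hsplit]
            rw [map_add, map_add, hFDl, hFDr, hFR _ hRT, hER]
          rw [map_neg] at heq
          linear_combination -heq
        | zero => simp
        | add a b _ _ ha hb => rw [map_add, map_add, map_add, ha, hb]
        | smul r a _ hh =>
          rw [map_smul, map_smul, hh]
          simp only [Algebra.smul_def, map_mul, Algebra.algebraMap_self_apply]
    intro C
    obtain ⟨n, hn⟩ := exists_mem C
    exact key n C hn
  -- ε kills cS B (ι x)
  have Lε2 : ∀ (x : L) (B : S), ε (cS B (ι x)) = 0 := by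
    intro x
    refine aind ?_ ?_ ?_ ?_
    · intro t; rw [hrestrict, hε]
    · intro r
      rw [Algebra.algebraMap_eq_smul_one, map_smul, LinearMap.smul_apply, L0]
      simp
    · intro a b ha hb
      rw [map_add, LinearMap.add_apply, map_add, ha, hb, add_zero]
    · intro a b ha hb
      rw [prodx, map_add, map_mul, map_mul, ha, hb]
      ring
  -- the operator B ↦ cS B (ι x) is a coderivation
  have tensor_der : ∀ (x : L) (u v : S ⊗[k] S),
      preLieAux.rho (cS.flip (ι x)) (u * v)
      = preLieAux.rho (cS.flip (ι x)) u * v + u * preLieAux.rho (cS.flip (ι x)) v := by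
    intro x u v
    induction u using TensorProduct.induction_on with
    | zero => simp
    | tmul a b =>
      induction v using TensorProduct.induction_on with
      | zero => simp
      | tmul c d =>
        simp only [preLieAux.rho, Algebra.TensorProduct.tmul_mul_tmul, LinearMap.add_apply,
          TensorProduct.map_tmul, LinearMap.flip_apply, LinearMap.id_apply, prodx,
          TensorProduct.add_tmul, TensorProduct.tmul_add, add_mul, mul_add]
        abel
      | add v1 v2 ih1 ih2 =>
        rw [mul_add, map_add, ih1, ih2, map_add]; ring
    | add u1 u2 ih1 ih2 =>
      rw [add_mul, map_add, ih1, ih2, map_add]; ring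
  have Δder : ∀ (x : L) (B : S), Δ (cS B (ι x))
      = preLieAux.rho (cS.flip (ι x)) (Δ B) := by
    intro x
    refine aind ?_ ?_ ?_ ?_
    · intro t
      rw [hrestrict, hΔ, hΔ]
      simp only [preLieAux.rho, map_add, LinearMap.add_apply, TensorProduct.map_tmul,
        LinearMap.flip_apply, LinearMap.id_apply, L0, hrestrict,
        TensorProduct.zero_tmul, TensorProduct.tmul_zero]
      abel
    · intro r
      simp [preLieAux.rho, Algebra.algebraMap_eq_smul_one, map_smul, LinearMap.smul_apply, L0,
        Algebra.TensorProduct.one_def, TensorProduct.map_tmul, LinearMap.add_apply,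
        LinearMap.flip_apply]
    · intro a b ha hb
      simp only [map_add, LinearMap.add_apply, ha, hb]
    · intro a b ha hb
      rw [show cS (a * b) (ι x) = cS a (ι x) * b + a * cS b (ι x) from prodx a b x,
        map_add, map_mul, map_mul, ha, hb, map_mul, tensor_der]
  -- key recursion for general first argument
  have L2 : ∀ (A B : S) (x : L),
      cS A (B * ι x) = cS (cS A B) (ι x) - cS A (cS B (ι x)) := by
    have base1 : ∀ (B : S) (x : L),
        cS 1 (B * ι x) = cS (cS 1 B) (ι x) - cS 1 (cS B (ι x)) := by
      intro B x
      simp [Lε, Lε2, map_mul, hε, Algebra.algebraMap_eq_smul_one, map_smul,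
        LinearMap.smul_apply, L0]
    refine aind ?_ ?_ ?_ ?_
    · exact fun t B x => hrec t x B
    · intro r B x
      simp only [Algebra.algebraMap_eq_smul_one, map_smul, LinearMap.smul_apply,
        base1 B x, smul_sub]
    · intro a b ha hb B x
      simp only [map_add, LinearMap.add_apply, ha B x, hb B x]
      ring
    · intro A1 A2 h1 h2 B x
      have key : ∀ u : S ⊗[k] S,
          TensorProduct.lift ((LinearMap.mul k S).compl₁₂ (cS A1) (cS A2))
            (u * (ι x ⊗ₜ[k] (1:S) + (1:S) ⊗ₜ[k] ι x))
          = cS (TensorProduct.lift ((LinearMap.mul k S).compl₁₂ (cS A1) (cS A2)) u) (ι x)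
            - TensorProduct.lift ((LinearMap.mul k S).compl₁₂ (cS A1) (cS A2))
              (preLieAux.rho (cS.flip (ι x)) u) := by
        intro u
        induction u using TensorProduct.induction_on with
        | zero => simp
        | tmul a b =>
          simp only [preLieAux.rho, mul_add, Algebra.TensorProduct.tmul_mul_tmul, mul_one,
            map_add, TensorProduct.lift.tmul, LinearMap.compl₁₂_apply, LinearMap.mul_apply',
            LinearMap.add_apply, TensorProduct.map_tmul, LinearMap.flip_apply,
            LinearMap.id_apply, h1 a x, h2 b x, prodx]
          ring
        | add u1 u2 ih1 ih2 =>
          simp only [add_mul, map_add, ih1, ih2, LinearMap.add_apply]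
          ring
      rw [hmul A1 A2 (B * ι x), map_mul, hΔ, key (Δ B), ← Δder x B,
        ← hmul A1 A2 B, ← hmul A1 A2 (cS B (ι x))]
  have τone : ∀ B : S,
      TensorProduct.lift ((LinearMap.mul k S).compl₁₂ (cS B) LinearMap.id) (Δ (1:S)) = B := by
    intro B
    rw [map_one, Algebra.TensorProduct.one_def]
    simp [TensorProduct.lift.tmul, LinearMap.compl₁₂_apply, LinearMap.mul_apply', hone]
  have τx : ∀ (B : S) (x : L),
      TensorProduct.lift ((LinearMap.mul k S).compl₁₂ (cS B) LinearMap.id) (Δ (ι x))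
        = cS B (ι x) + B * ι x := by
    intro B x
    rw [hΔ]
    simp [TensorProduct.lift.tmul, LinearMap.compl₁₂_apply, LinearMap.mul_apply', hone]
  have G1 : ∀ (A B : S) (x : L),
      cS (cS A B) (ι x)
        = cS A (TensorProduct.lift ((LinearMap.mul k S).compl₁₂ (cS B) LinearMap.id)
            (Δ (ι x))) := by
    intro A B x
    rw [τx, map_add, L2]
    ring
  have star : ∀ (B : S) (x : L) (C0 : S),
      TensorProduct.lift ((LinearMap.mul k S).compl₁₂ (cS B) LinearMap.id) (Δ (C0 * ι x))
        = cS (TensorProduct.lift ((LinearMap.mul k S).compl₁₂ (cS B) LinearMap.id) (Δ C0)) (ι x)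
          + (TensorProduct.lift ((LinearMap.mul k S).compl₁₂ (cS B) LinearMap.id) (Δ C0)) * ι x
          - TensorProduct.lift ((LinearMap.mul k S).compl₁₂ (cS B) LinearMap.id)
              (Δ (cS C0 (ι x))) := by
    intro B x C0
    have key : ∀ u : S ⊗[k] S,
        TensorProduct.lift ((LinearMap.mul k S).compl₁₂ (cS B) LinearMap.id)
          (u * (ι x ⊗ₜ[k] (1:S) + (1:S) ⊗ₜ[k] ι x))
        = cS (TensorProduct.lift ((LinearMap.mul k S).compl₁₂ (cS B) LinearMap.id) u) (ι x)
          + (TensorProduct.lift ((LinearMap.mul k S).compl₁₂ (cS B) LinearMap.id) u) * ι x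
          - TensorProduct.lift ((LinearMap.mul k S).compl₁₂ (cS B) LinearMap.id)
              (preLieAux.rho (cS.flip (ι x)) u) := by
      intro u
      induction u using TensorProduct.induction_on with
      | zero => simp
      | tmul a b =>
        simp only [preLieAux.rho, mul_add, Algebra.TensorProduct.tmul_mul_tmul, mul_one,
          map_add, TensorProduct.lift.tmul, LinearMap.compl₁₂_apply, LinearMap.mul_apply',
          LinearMap.add_apply, TensorProduct.map_tmul, LinearMap.flip_apply,
          LinearMap.id_apply, L2, prodx]
        ring
      | add u1 u2 ih1 ih2 =>
        simp only [add_mul, map_add, ih1, ih2, LinearMap.add_apply]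
        ring
    rw [map_mul, hΔ, key (Δ C0), ← Δder x C0]
  have main : ∀ (n : ℕ) (C : S), C ∈ M n → ∀ A B : S,
      cS (cS A B) C
        = cS A (TensorProduct.lift ((LinearMap.mul k S).compl₁₂ (cS B) LinearMap.id)
            (Δ C)) := by
    intro n
    induction n with
    | zero =>
      intro C hC
      induction hC using Submodule.span_induction with
      | mem m hm =>
        obtain ⟨l, hl, rfl⟩ := hm
        have : l = [] := List.length_eq_zero_iff.mp (Nat.le_zero.mp hl)
        subst this
        intro A B
        simp only [List.map_nil, List.prod_nil, hone, τone]
      | zero => intro A B; simp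
      | add a b _ _ ha hb =>
        intro A B
        simp only [map_add, ha A B, hb A B]
      | smul r a _ hh =>
        intro A B
        simp only [map_smul, hh A B]
    | succ n ih =>
      intro C hC
      induction hC using Submodule.span_induction with
      | mem m hm =>
        obtain ⟨l, hl, rfl⟩ := hm
        rcases l with _ | ⟨x, l'⟩
        · intro A B
          simp only [List.map_nil, List.prod_nil, hone, τone]
        · intro A B
          have hl' : l'.length ≤ n := by simpa using hl
          have hC0 : ((l'.map ι).prod) ∈ M n := Submodule.subset_span ⟨l', hl', rfl⟩
          have hC0x : cS ((l'.map ι).prod) (ι x) ∈ M n := cSx_mem n x _ hC0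
          have hprod : ((x :: l').map ι).prod = (l'.map ι).prod * ι x := by
            simp [mul_comm]
          rw [hprod]
          rw [L2 (cS A B) ((l'.map ι).prod) x]
          rw [ih _ hC0 A B]
          rw [ih _ hC0x A B]
          rw [G1 A _ x]
          rw [star B x ((l'.map ι).prod)]
          rw [τx _ x]
          rw [map_sub (cS A)]
      | zero => intro A B; simp
      | add a b _ _ ha hb =>
        intro A B
        simp only [map_add, ha A B, hb A B]
      | smul r a _ hh =>
        intro A B
        simp only [map_smul, hh A B]
  intro A B C
  obtain ⟨n, hn⟩ := exists_mem C
  exact main n C hn A B
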